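/- arXiv:2605.18292 — 3 statements merged into one kernel-verified Lean document; each statement's English description precedes it below -/
import Mathlib

section
/- The scalar deadzone function satisfies the generalized sector condition: for any real v and any real h with |h| ≤ 1, dzn(v)·(v + h − dzn(v)) ≥ 0. -/
noncomputable def dzn (v : ℝ) : ℝ := if |v| ≤ 1 then 0 else if v > 1 then v - 1 else v + 1

theorem dzn_generalized_sector_scalar (v h : ℝ) (hh : |h| ≤ 1) :
    dzn v * (v + h - dzn v) ≥ 0 := by
  rw [abs_le] at hh
  unfold dzn
  split_ifs with h1 h2
  · simp
  · nlinarith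
  · rw [abs_le] at h1; push_neg at h1 h2
    have hv : v < -1 := by by_contra hc; push_neg at hc; linarith [h1 hc]
    nlinarith
end

section
/- Generalized sector condition (vectorized): Let Δ : ℝ^m → ℝ^m apply dzn elementwise, let Λ be a diagonal matrix with positive diagonal entries, let H ∈ ℝ^{m×n}, and let x ∈ ℝ^n satisfy ‖Hx‖_∞ ≤ 1. Then for every v ∈ ℝ^m, Γ(v,x,Λ,H) := [Δ(v); v + Hx]ᵀ [[−2Λ, Λ],[Λ, 0]] [Δ(v); v + Hx] ≥ 0. -/
open Matrix

lemma dzn_key (a u : ℝ) (hu : |u| ≤ 1) : 0 ≤ dzn a * (a + u - dzn a) := by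
  unfold dzn
  rcases abs_le.mp hu with ⟨h1, h2⟩
  split_ifs with h ha
  · simp
  · have : a + u - (a - 1) = u + 1 := by ring
    rw [this]
    nlinarith [abs_le.not.mp h]
  · have hlt : a < -1 := by
      push_neg at ha
      by_contra hc
      push_neg at hc
      exact h (abs_le.mpr ⟨hc, ha⟩)
    have : a + u - (a + 1) = u - 1 := by ring
    rw [this]
    nlinarith

theorem dzn_generalized_sector_vector
    (m n : ℕ) (lam : Fin m → ℝ) (hlam : ∀ i, 0 < lam i)
    (H : Matrix (Fin m) (Fin n) ℝ) (x : Fin n → ℝ)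
    (hx : ∀ i, |H.mulVec x i| ≤ 1) (v : Fin m → ℝ) :
    0 ≤ (Sum.elim (fun i => dzn (v i)) (fun i => v i + H.mulVec x i)) ⬝ᵥ
        ((Matrix.fromBlocks (-(2 : ℝ) • Matrix.diagonal lam) (Matrix.diagonal lam)
            (Matrix.diagonal lam) 0).mulVec
          (Sum.elim (fun i => dzn (v i)) (fun i => v i + H.mulVec x i))) := by
  rw [dotProduct]
  simp only [Fintype.sum_sum_type, Sum.elim_inl, Sum.elim_inr,
    fromBlocks_mulVec, mulVec_diagonal, Matrix.smul_mulVec,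
    Pi.add_apply, Pi.smul_apply, smul_eq_mul, zero_mulVec, Pi.zero_apply, add_zero, Function.comp, Sum.elim_inl, Sum.elim_inr]
  rw [← Finset.sum_add_distrib]
  apply Finset.sum_nonneg
  intro i _
  have h := dzn_key (v i) (H.mulVec x i) (hx i)
  have hl := (hlam i).le
  nlinarith
end

section
/- LMI implies dissipation inequality along the nonlinear dynamics: Suppose P ≻ 0, M diagonal positive, L ∈ ℝ^{m×n}, α ∈ (0,1), and the block matrix F = [[−α²P, 0, PC₂ᵀ + Lᵀ, PAᵀ],[0, −I, D₂₁ᵀ, Bᵀ],[C₂P + L, D₂₁, −2M, MB₂ᵀ],[AP, B, B₂M, −P]] is negative semidefinite. Let Q = P⁻¹, H = LP⁻¹, Λ = M⁻¹. Then for any x ∈ ℝ^n with ‖Hx‖_∞ ≤ 1, any input u, with v = C₂x + D₂₁u, w = Δ(v) (elementwise deadzone), and x⁺ = Ax + Bu + B₂w, it holds that x⁺ᵀ Q x⁺ ≤ α² xᵀ Q x + uᵀu. -/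
/-!
Evaluate the quadratic form of `F` at `ξ = (P⁻¹x, u, M⁻¹w, P⁻¹x⁺)`, which is the congruence by
`diag(P⁻¹, I, M⁻¹, P⁻¹)`. Because `P⁻¹x⁺` is paired both with the `-P` block and with the
coupling blocks `AP, B, B₂M`, these contribute `2 x⁺ᵀP⁻¹x⁺ - x⁺ᵀP⁻¹x⁺`, so no Schur complement is
needed: `F ≼ 0` gives directly
`x⁺ᵀP⁻¹x⁺ - α² xᵀP⁻¹x - uᵀu + 2 wᵀM⁻¹(v + Hx - w) ≤ 0`.
The last term is nonnegative by the sector condition of the deadzone, as `‖Hx‖_∞ ≤ 1`.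
-/

open Matrix

-- For `v > 1` the two factors are `v - 1` and `1 + h`, for `v < -1` they are `v + 1` and `h - 1`.
theorem dzn_mul_add_sub_nonneg (v h : ℝ) (hh : |h| ≤ 1) : 0 ≤ dzn v * (v + h - dzn v) := by
  rw [abs_le] at hh
  unfold dzn
  split_ifs with hv hv'
  · simp
  · nlinarith
  · have : v < -1 := by
      by_contra! hc
      exact hv (abs_le.mpr ⟨hc, not_lt.mp hv'⟩)
    nlinarith

theorem diagonal_mulVec_dzn_dotProduct_nonneg {ι : Type*} [Fintype ι] [DecidableEq ι]
    (s : ι → ℝ) (hs : ∀ i, 0 ≤ s i) (v h : ι → ℝ) (hh : ∀ i, |h i| ≤ 1) :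
    0 ≤ (diagonal s *ᵥ fun i => dzn (v i)) ⬝ᵥ (v + h - fun i => dzn (v i)) :=
  Finset.sum_nonneg fun i _ => by
    rw [mulVec_diagonal, mul_assoc]
    exact mul_nonneg (hs i) (dzn_mul_add_sub_nonneg _ _ (hh i))

section BlockQuadraticForm

variable {R : Type*} [CommRing R] {l m l' m' : Type*} [Fintype l] [Fintype m] [Fintype l']
  [Fintype m']

theorem sumElim_dotProduct_fromBlocks_mulVec_sumElim (X : Matrix l l' R) (Y : Matrix l m' R)
    (Z : Matrix m l' R) (W : Matrix m m' R) (p : l → R) (q : m → R) (p' : l' → R) (q' : m' → R) :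
    Sum.elim p q ⬝ᵥ fromBlocks X Y Z W *ᵥ Sum.elim p' q' =
      p ⬝ᵥ X *ᵥ p' + p ⬝ᵥ Y *ᵥ q' + q ⬝ᵥ Z *ᵥ p' + q ⬝ᵥ W *ᵥ q' := by
  simp only [fromBlocks_mulVec, Sum.elim_comp_inl, Sum.elim_comp_inr,
    sumElim_dotProduct_sumElim, dotProduct_add]
  ring

theorem Matrix.IsSymm.dotProduct_mulVec_comm {S : Matrix l l R} (hS : S.IsSymm) (y z : l → R) :
    y ⬝ᵥ S *ᵥ z = z ⬝ᵥ S *ᵥ y := by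
  rw [← dotProduct_transpose_mulVec, hS.eq]

end BlockQuadraticForm

section LMI

variable {R : Type*} [CommRing R] {n r m : Type*} [Fintype n] [Fintype r] [Fintype m]
  [DecidableEq r]

def lmiMatrix (α : R) (A : Matrix n n R) (B : Matrix n r R) (B₂ : Matrix n m R)
    (C₂ : Matrix m n R) (D₂₁ : Matrix m r R) (P : Matrix n n R) (M : Matrix m m R)
    (L : Matrix m n R) : Matrix ((n ⊕ r) ⊕ (m ⊕ n)) ((n ⊕ r) ⊕ (m ⊕ n)) R :=
  fromBlocks
    (fromBlocks (-(α ^ 2) • P) 0 0 (-(1 : Matrix r r R)))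
    (fromBlocks (P * C₂ᵀ + Lᵀ) (P * Aᵀ) D₂₁ᵀ Bᵀ)
    (fromBlocks (C₂ * P + L) D₂₁ (A * P) B)
    (fromBlocks (-(2 : R) • M) (M * B₂ᵀ) (B₂ * M) (-P))

theorem dotProduct_lmiMatrix_mulVec (α : R) (A : Matrix n n R) (B : Matrix n r R)
    (B₂ : Matrix n m R) (C₂ : Matrix m n R) (D₂₁ : Matrix m r R) {P : Matrix n n R}
    (hP : P.IsSymm) {M : Matrix m m R} (hM : M.IsSymm) (L : Matrix m n R)
    (a : n → R) (u : r → R) (c : m → R) (e : n → R) :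
    Sum.elim (Sum.elim a u) (Sum.elim c e) ⬝ᵥ
        lmiMatrix α A B B₂ C₂ D₂₁ P M L *ᵥ Sum.elim (Sum.elim a u) (Sum.elim c e) =
      2 * (e ⬝ᵥ (A *ᵥ P *ᵥ a + B *ᵥ u + B₂ *ᵥ M *ᵥ c)) - e ⬝ᵥ P *ᵥ e
        - α ^ 2 * (a ⬝ᵥ P *ᵥ a) - u ⬝ᵥ u
        + 2 * (c ⬝ᵥ (C₂ *ᵥ P *ᵥ a + D₂₁ *ᵥ u + L *ᵥ a - M *ᵥ c)) := by
  simp only [lmiMatrix, sumElim_dotProduct_fromBlocks_mulVec_sumElim, add_mulVec, neg_mulVec,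
    smul_mulVec, one_mulVec, zero_mulVec, ← mulVec_mulVec, dotProduct_add, dotProduct_sub,
    dotProduct_neg, dotProduct_smul, dotProduct_zero, smul_eq_mul, dotProduct_transpose_mulVec]
  rw [hP.dotProduct_mulVec_comm a (C₂ᵀ *ᵥ c), hP.dotProduct_mulVec_comm a (Aᵀ *ᵥ e),
    hM.dotProduct_mulVec_comm c (B₂ᵀ *ᵥ e),
    dotProduct_comm (C₂ᵀ *ᵥ c), dotProduct_comm (Aᵀ *ᵥ e), dotProduct_comm (B₂ᵀ *ᵥ e),
    dotProduct_transpose_mulVec, dotProduct_transpose_mulVec, dotProduct_transpose_mulVec]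
  ring

end LMI

theorem lmi_implies_dissipation_general (n r m : ℕ)
    (A : Matrix (Fin n) (Fin n) ℝ) (B : Matrix (Fin n) (Fin r) ℝ)
    (B₂ : Matrix (Fin n) (Fin m) ℝ) (C₂ : Matrix (Fin m) (Fin n) ℝ)
    (D₂₁ : Matrix (Fin m) (Fin r) ℝ)
    (P : Matrix (Fin n) (Fin n) ℝ) (hP : P.PosDef)
    (d : Fin m → ℝ) (hd : ∀ i, 0 < d i) (M : Matrix (Fin m) (Fin m) ℝ)
    (hM : M = Matrix.diagonal d)
    (L : Matrix (Fin m) (Fin n) ℝ) (α : ℝ)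
    (hF : (-(Matrix.fromBlocks
        (Matrix.fromBlocks (-(α ^ 2) • P) 0 0 (-(1 : Matrix (Fin r) (Fin r) ℝ)))
        (Matrix.fromBlocks (P * C₂ᵀ + Lᵀ) (P * Aᵀ) D₂₁ᵀ Bᵀ)
        (Matrix.fromBlocks (C₂ * P + L) D₂₁ (A * P) B)
        (Matrix.fromBlocks (-(2 : ℝ) • M) (M * B₂ᵀ) (B₂ * M) (-P)))).PosSemidef)
    (x : Fin n → ℝ) (u : Fin r → ℝ) (hx : ∀ i, |(L * P⁻¹).mulVec x i| ≤ 1) :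
    (A.mulVec x + B.mulVec u +
        B₂.mulVec (fun i => dzn ((C₂.mulVec x + D₂₁.mulVec u) i))) ⬝ᵥ
      P⁻¹.mulVec (A.mulVec x + B.mulVec u +
        B₂.mulVec (fun i => dzn ((C₂.mulVec x + D₂₁.mulVec u) i))) ≤
    α ^ 2 * (x ⬝ᵥ P⁻¹.mulVec x) + u ⬝ᵥ u := by
  set v := C₂ *ᵥ x + D₂₁ *ᵥ u
  set w : Fin m → ℝ := fun i => dzn (v i)
  set xNext := A *ᵥ x + B *ᵥ u + B₂ *ᵥ w
  set c := diagonal d⁻¹ *ᵥ w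
  have hPP : ∀ y, P *ᵥ P⁻¹ *ᵥ y = y := fun y => by
    rw [mulVec_mulVec, mul_nonsing_inv _ hP.det_pos.ne'.isUnit, one_mulVec]
  have hMc : M *ᵥ c = w := by
    rw [hM, mulVec_mulVec, diagonal_mul_diagonal,
      show (fun i => d i * d⁻¹ i) = fun _ => 1 from funext fun i => mul_inv_cancel₀ (hd i).ne',
      diagonal_one, one_mulVec]
  set ξ := Sum.elim (Sum.elim (P⁻¹ *ᵥ x) u) (Sum.elim c (P⁻¹ *ᵥ xNext))
  have hLMI : ξ ⬝ᵥ lmiMatrix α A B B₂ C₂ D₂₁ P M L *ᵥ ξ ≤ 0 := by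
    have := hF.dotProduct_mulVec_nonneg ξ
    rwa [star_trivial, neg_mulVec, dotProduct_neg, neg_nonneg] at this
  rw [dotProduct_lmiMatrix_mulVec α A B B₂ C₂ D₂₁ (isHermitian_iff_isSymm.mp hP.isHermitian)
    (hM ▸ isSymm_diagonal d), hPP, hPP, hMc,
    dotProduct_comm (P⁻¹ *ᵥ x), dotProduct_comm (P⁻¹ *ᵥ xNext)] at hLMI
  have hSector : 0 ≤ c ⬝ᵥ (v + L *ᵥ P⁻¹ *ᵥ x - w) :=
    diagonal_mulVec_dzn_dotProduct_nonneg _ (fun i => inv_nonneg.mpr (hd i).le) v _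
      (by simpa only [mulVec_mulVec] using hx)
  linarith

theorem lmi_implies_dissipation (n r m : ℕ)
    (A : Matrix (Fin n) (Fin n) ℝ) (B : Matrix (Fin n) (Fin r) ℝ)
    (B₂ : Matrix (Fin n) (Fin m) ℝ) (C₂ : Matrix (Fin m) (Fin n) ℝ)
    (D₂₁ : Matrix (Fin m) (Fin r) ℝ)
    (P : Matrix (Fin n) (Fin n) ℝ) (hP : P.PosDef)
    (d : Fin m → ℝ) (hd : ∀ i, 0 < d i) (M : Matrix (Fin m) (Fin m) ℝ)
    (hM : M = Matrix.diagonal d)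
    (L : Matrix (Fin m) (Fin n) ℝ) (α : ℝ) (hα : 0 < α) (hα1 : α < 1)
    (hF : (-(Matrix.fromBlocks
        (Matrix.fromBlocks (-(α ^ 2) • P) 0 0 (-(1 : Matrix (Fin r) (Fin r) ℝ)))
        (Matrix.fromBlocks (P * C₂ᵀ + Lᵀ) (P * Aᵀ) D₂₁ᵀ Bᵀ)
        (Matrix.fromBlocks (C₂ * P + L) D₂₁ (A * P) B)
        (Matrix.fromBlocks (-(2 : ℝ) • M) (M * B₂ᵀ) (B₂ * M) (-P)))).PosSemidef)
    (x : Fin n → ℝ) (u : Fin r → ℝ) (hx : ∀ i, |(L * P⁻¹).mulVec x i| ≤ 1) :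
    (A.mulVec x + B.mulVec u +
        B₂.mulVec (fun i => dzn ((C₂.mulVec x + D₂₁.mulVec u) i))) ⬝ᵥ
      P⁻¹.mulVec (A.mulVec x + B.mulVec u +
        B₂.mulVec (fun i => dzn ((C₂.mulVec x + D₂₁.mulVec u) i))) ≤
    α ^ 2 * (x ⬝ᵥ P⁻¹.mulVec x) + u ⬝ᵥ u :=
  lmi_implies_dissipation_general n r m A B B₂ C₂ D₂₁ P hP d hd M hM L α hF x u hx
end
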